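/- arXiv:2109.03709 — 3 statements merged into one kernel-verified Lean document; each statement's English description precedes it below -/
import Mathlib

section
/- (Theorem 1, convergence of primed PCA.) Let M be a real symmetric positive semidefinite d×d matrix whose k largest eigenvalues are simple and strictly separated: λ₁ > λ₂ > … > λ_k > λ_{k+1}, with corresponding orthonormal eigenvectors e₁, …, e_k. For each i ≤ k let (v_i(τ))_{τ∈ℕ} be a sequence of unit vectors in ℝ^d with v_i(τ) → e_i as τ → ∞, and set S(τ) = span(v₁(τ), …, v_k(τ)). Then there exists τ* such that for all τ > τ*: S(τ) is k-dimensional, and for any orthonormal vectors w₁(τ), …, w_k(τ) ∈ S(τ) that are eigenvectors of the compression P_{S(τ)} M P_{S(τ)} of M to S(τ) ordered by decreasing eigenvalue (the output of the full-PCA step on S(τ)), one has ⟨w_i(τ), e_i⟩² → 1 as τ → ∞ for each i ≤ k. Consequently, for every threshold V ∈ (0, π/2) there exists τ** such that for all τ > τ**, the angle between w_i(τ) and ±e_i is below V for every i ≤ k, so the full-PCA output attains the maximal longest correct eigenvector streak k, which is greater than or equal to the streak of the priming output v₁(τ), …, v_k(τ). -/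
open scoped RealInnerProductSpace
open Filter

/-- The longest correct eigenvector streak of the estimates `u` with respect to the
ground-truth directions `e` at threshold `V`: the largest `m ≤ k` such that for every
`i < m` the angle between `u i` and `e i` or between `u i` and `-e i` is below `V`. -/
noncomputable def longestCorrectStreak {E : Type*} [NormedAddCommGroup E]
    [InnerProductSpace ℝ E] (k : ℕ) (V : ℝ) (u e : Fin k → E) : ℕ :=
  sSup {m | m ≤ k ∧ ∀ i : Fin k, (i : ℕ) < m →
    (InnerProductGeometry.angle (u i) (e i) < V ∨
      InnerProductGeometry.angle (u i) (-(e i)) < V)}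

variable {E : Type*} [NormedAddCommGroup E] [InnerProductSpace ℝ E]

/-- Two-term Bessel inequality. -/
lemma aux_pair {k : ℕ} {f : Fin k → E} (hf : Orthonormal ℝ f) (x : E)
    {a b : Fin k} (hab : a ≠ b) :
    ⟪f a, x⟫ ^ 2 + ⟪f b, x⟫ ^ 2 ≤ ‖x‖ ^ 2 := by
  have h := hf.sum_inner_products_le x (s := {a, b})
  rw [Finset.sum_pair hab] at h
  simpa [Real.norm_eq_abs, sq_abs, real_inner_comm] using h

/-- Rayleigh quotient upper bound via the spectral data. -/
lemma aux_qbound {k : ℕ} (T : E →ₗ[ℝ] E)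
    (lam : Fin k → ℝ) (mu : ℝ) (e : Fin k → E) (horth : Orthonormal ℝ e)
    (heig : ∀ i, T (e i) = lam i • e i)
    (hsym : ∀ x y : E, ⟪T x, y⟫ = ⟪x, T y⟫)
    (hgap : ∀ x : E, (∀ i, ⟪e i, x⟫ = 0) → ⟪x, T x⟫ ≤ mu * ‖x‖ ^ 2)
    (x : E) (hx : ‖x‖ = 1) (i : Fin k) (b : ℝ) (hmub : mu ≤ b)
    (hjb : ∀ j, i < j → lam j ≤ b) :
    ⟪x, T x⟫ ≤ b + ∑ j ∈ Finset.univ.filter (· ≤ i), (lam j - b) * ⟪e j, x⟫ ^ 2 := by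
  set c : Fin k → ℝ := fun j => ⟪e j, x⟫ with hc
  set r : E := x - ∑ j, c j • e j with hr
  have hre : ∀ j, ⟪e j, r⟫ = 0 := by
    intro j
    rw [hr, inner_sub_right, horth.inner_right_fintype]
    simp [hc]
  have hTr : T r = T x - ∑ j, c j • (lam j • e j) := by
    simp [hr, map_sub, map_sum, map_smul, heig]
  have hxTr : ⟪x, T r⟫ = ⟪r, T r⟫ := by
    have hxr : x = r + ∑ j, c j • e j := by rw [hr]; abel
    rw [hxr, inner_add_left, sum_inner]
    have : ∀ j ∈ Finset.univ, ⟪c j • e j, T r⟫ = 0 := by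
      intro j _
      rw [inner_smul_left, ← hsym (e j) r, heig, inner_smul_left, hre]
      simp
    rw [Finset.sum_eq_zero this]; ring
  have h1 : ⟪x, T x⟫ = ⟪r, T r⟫ + ∑ j, lam j * c j ^ 2 := by
    have hTx : T x = T r + ∑ j, c j • (lam j • e j) := by rw [hTr]; abel
    rw [hTx, inner_add_right, hxTr, inner_sum]
    congr 1
    refine Finset.sum_congr rfl fun j _ => ?_
    rw [inner_smul_right, inner_smul_right, real_inner_comm]
    simp [hc]; ring
  have hnr : ‖r‖ ^ 2 = 1 - ∑ j, c j ^ 2 := by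
    rw [← real_inner_self_eq_norm_sq]
    nth_rewrite 1 [hr]
    rw [inner_sub_left, sum_inner]
    have h2 : ∀ j ∈ Finset.univ, ⟪c j • e j, r⟫ = 0 := by
      intro j _
      rw [real_inner_smul_left, hre]; simp
    rw [Finset.sum_eq_zero h2, sub_zero, hr, inner_sub_right, inner_sum]
    have h3 : ∀ j ∈ Finset.univ, ⟪x, c j • e j⟫ = c j ^ 2 := by
      intro j _
      rw [real_inner_smul_right, real_inner_comm]
      simp only [hc]; ring
    rw [Finset.sum_congr rfl h3, real_inner_self_eq_norm_sq, hx]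
    ring
  have hqr : ⟪r, T r⟫ ≤ mu * ‖r‖ ^ 2 := hgap r hre
  have hrb : mu * ‖r‖ ^ 2 ≤ b * ‖r‖ ^ 2 :=
    mul_le_mul_of_nonneg_right hmub (sq_nonneg _)
  have hsplit : ∑ j, (lam j - b) * c j ^ 2 = ∑ j, lam j * c j ^ 2 - b * ∑ j, c j ^ 2 := by
    rw [Finset.mul_sum, ← Finset.sum_sub_distrib]
    exact Finset.sum_congr rfl fun j _ => by ring
  have hsum : ∑ j, (lam j - b) * c j ^ 2 ≤
      ∑ j ∈ Finset.univ.filter (· ≤ i), (lam j - b) * c j ^ 2 := by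
    rw [← Finset.sum_filter_add_sum_filter_not Finset.univ (· ≤ i)]
    have hnp : ∑ j ∈ Finset.univ.filter (fun j => ¬ j ≤ i), (lam j - b) * c j ^ 2 ≤ 0 :=
      Finset.sum_nonpos fun j hj => by
        have hij : i < j := lt_of_not_ge (by simpa using (Finset.mem_filter.1 hj).2)
        exact mul_nonpos_of_nonpos_of_nonneg (by linarith [hjb j hij]) (sq_nonneg _)
    linarith
  have hb1 : b * ‖r‖ ^ 2 = b - b * ∑ j, c j ^ 2 := by rw [hnr]; ring
  linarith

lemma aux_basis_expand {k : ℕ} [Nonempty (Fin k)] {S : Submodule ℝ E}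
    (hfin : Module.finrank ℝ S = k)
    {w : Fin k → E} (hw : Orthonormal ℝ w) (hmem : ∀ j, w j ∈ S)
    {u : E} (hu : u ∈ S) : u = ∑ j, ⟪w j, u⟫ • w j := by
  set w' : Fin k → S := fun j => ⟨w j, hmem j⟩ with hw'def
  have hw' : Orthonormal ℝ w' := by
    rw [orthonormal_iff_ite] at hw ⊢
    intro i j
    rw [Submodule.coe_inner]
    exact hw i j
  have hsp : ⊤ ≤ Submodule.span ℝ (Set.range w') :=
    le_of_eq (hw'.linearIndependent.span_eq_top_of_card_eq_finrank
      (by simp [hfin])).symm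
  let b : OrthonormalBasis (Fin k) ℝ S := OrthonormalBasis.mk hw' hsp
  have hrepr := b.sum_repr' (⟨u, hu⟩ : S)
  have hval := congrArg (Subtype.val : S → E) hrepr
  rw [Submodule.coe_sum] at hval
  have : ∀ j, ((⟪b j, (⟨u, hu⟩ : S)⟫ • b j : S) : E) = ⟪w j, u⟫ • w j := by
    intro j
    have hbj : b j = w' j := congrFun (OrthonormalBasis.coe_mk hw' hsp) j
    rw [hbj, Submodule.coe_smul, Submodule.coe_inner]
  rw [Finset.sum_congr rfl fun j _ => this j] at hval
  exact hval.symm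

lemma aux_rayleigh {k : ℕ} [FiniteDimensional ℝ E] (T : E →ₗ[ℝ] E)
    (hsym : ∀ x y : E, ⟪T x, y⟫ = ⟪x, T y⟫)
    {S : Submodule ℝ E} (hfin : Module.finrank ℝ S = k)
    {w : Fin k → E} (hw : Orthonormal ℝ w) (hmem : ∀ j, w j ∈ S)
    {μw : Fin k → ℝ}
    (heigw : ∀ j, (Submodule.orthogonalProjection S (T (w j)) : E) = μw j • w j)
    (hmono : ∀ i j : Fin k, i ≤ j → μw j ≤ μw i)
    (i : Fin k) {u : E} (hu : u ∈ S) (horthu : ∀ j, j < i → ⟪w j, u⟫ = 0) :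
    ⟪u, T u⟫ ≤ μw i * ‖u‖ ^ 2 := by
  have : Nonempty (Fin k) := ⟨i⟩
  have hexp : u = ∑ j, ⟪w j, u⟫ • w j := aux_basis_expand hfin hw hmem hu
  have hproj : ∀ j, ⟪T (w j), u⟫ = μw j * ⟪w j, u⟫ := by
    intro j
    have h0 : ⟪T (w j) - (Submodule.orthogonalProjection S (T (w j)) : E), u⟫ = 0 :=
      Submodule.starProjection_inner_eq_zero (K := S) _ u hu
    rw [inner_sub_left, sub_eq_zero] at h0
    rw [h0, heigw j, real_inner_smul_left]
  have hq : ⟪u, T u⟫ = ∑ j, μw j * ⟪w j, u⟫ ^ 2 := by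
    nth_rewrite 1 [hexp]
    rw [sum_inner]
    refine Finset.sum_congr rfl fun j _ => ?_
    rw [real_inner_smul_left, ← hsym (w j) u, hproj j]
    ring
  have hnorm : ‖u‖ ^ 2 = ∑ j, ⟪w j, u⟫ ^ 2 := by
    rw [← real_inner_self_eq_norm_sq]
    nth_rewrite 1 [hexp]
    rw [sum_inner]
    refine Finset.sum_congr rfl fun j _ => ?_
    rw [real_inner_smul_left]
    ring
  rw [hq, hnorm, Finset.mul_sum]
  refine Finset.sum_le_sum fun j _ => ?_
  rcases lt_or_ge j i with h | h
  · simp [horthu j h]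
  · exact mul_le_mul_of_nonneg_right (hmono i j h) (sq_nonneg _)

variable {E : Type*} [NormedAddCommGroup E] [InnerProductSpace ℝ E]

lemma aux_angle {x y : E} (hx : ‖x‖ = 1) (hy : ‖y‖ = 1) {V : ℝ}
    (hV0 : 0 ≤ V) (hVpi : V ≤ Real.pi) (h : Real.cos V < ⟪x, y⟫) :
    InnerProductGeometry.angle x y < V := by
  have h1 : ⟪x, y⟫ ≤ 1 := by
    have := abs_real_inner_le_norm x y
    rw [hx, hy] at this
    simpa using (abs_le.1 (by simpa using this)).2
  have hangle : InnerProductGeometry.angle x y = Real.arccos ⟪x, y⟫ := by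
    rw [InnerProductGeometry.angle, hx, hy, mul_one, div_one]
  rw [hangle]
  have hcos1 : Real.cos V ∈ Set.Icc (-1 : ℝ) 1 := ⟨Real.neg_one_le_cos V, Real.cos_le_one V⟩
  have hin : ⟪x, y⟫ ∈ Set.Icc (-1 : ℝ) 1 := ⟨by linarith [hcos1.1], h1⟩
  have := Real.strictAntiOn_arccos hcos1 hin h
  rwa [Real.arccos_cos hV0 hVpi] at this

lemma aux_key {d k : ℕ} (T : EuclideanSpace ℝ (Fin d) →ₗ[ℝ] EuclideanSpace ℝ (Fin d))
    (hsym : ∀ x y : EuclideanSpace ℝ (Fin d), ⟪T x, y⟫ = ⟪x, T y⟫)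
    (lam : Fin k → ℝ) (mu : ℝ) (e : Fin k → EuclideanSpace ℝ (Fin d))
    (horth : Orthonormal ℝ e)
    (heig : ∀ i : Fin k, T (e i) = lam i • e i)
    (hstrict : ∀ i j : Fin k, i < j → lam j < lam i)
    (hsep : ∀ i : Fin k, mu < lam i)
    (hgap : ∀ x : EuclideanSpace ℝ (Fin d), (∀ i : Fin k, ⟪e i, x⟫ = 0) →
      ⟪x, T x⟫ ≤ mu * ‖x‖ ^ 2)
    (v : ℕ → Fin k → EuclideanSpace ℝ (Fin d))
    (hvconv : ∀ i : Fin k, Tendsto (fun τ => v τ i) atTop (nhds (e i)))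
    (S : ℕ → Submodule ℝ (EuclideanSpace ℝ (Fin d)))
    (hvS : ∀ τ, ∀ i : Fin k, v τ i ∈ S τ)
    (N : ℕ)
    (hfinrank : ∀ τ > N, Module.finrank ℝ (S τ) = k)
    (w : ℕ → Fin k → EuclideanSpace ℝ (Fin d)) (μw : ℕ → Fin k → ℝ)
    (hwon : ∀ τ > N, Orthonormal ℝ (w τ))
    (hwS : ∀ τ > N, ∀ i : Fin k, w τ i ∈ S τ)
    (hweig : ∀ τ > N, ∀ i : Fin k,
      (Submodule.orthogonalProjection (S τ) (T (w τ i)) : EuclideanSpace ℝ (Fin d)) = μw τ i • w τ i)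
    (hwmono : ∀ τ > N, ∀ i j : Fin k, i ≤ j → μw τ j ≤ μw τ i)
    (hmuq : ∀ τ > N, ∀ i : Fin k, μw τ i = ⟪w τ i, T (w τ i)⟫)
    (hqcont : Continuous fun x : EuclideanSpace ℝ (Fin d) => ⟪x, T x⟫) :
    ∀ n : ℕ, ∀ i : Fin k, (i : ℕ) ≤ n →
      Tendsto (fun τ => ⟪w τ i, e i⟫ ^ 2) atTop (nhds 1) := by
  intro n
  induction n using Nat.strong_induction_on with
  | _ n IH =>
  intro i hi
  have IH' : ∀ j : Fin k, j < i → Tendsto (fun τ => ⟪w τ j, e j⟫ ^ 2) atTop (nhds 1) :=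
    fun j hj => IH (j : ℕ) (lt_of_lt_of_le hj hi) j le_rfl
  -- coefficients of w τ i on earlier e j vanish
  have hcj0 : ∀ j : Fin k, j < i →
      Tendsto (fun τ => ⟪e j, w τ i⟫ ^ 2) atTop (nhds 0) := by
    intro j hj
    have hub : ∀ᶠ τ in atTop, ⟪e j, w τ i⟫ ^ 2 ≤ 1 - ⟪w τ j, e j⟫ ^ 2 := by
      filter_upwards [eventually_gt_atTop N] with τ hτ
      have h2 := aux_pair (hwon τ hτ) (e j) (a := i) (b := j) (ne_of_gt hj)
      rw [horth.1 j] at h2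
      have h1 : ⟪e j, w τ i⟫ ^ 2 = ⟪w τ i, e j⟫ ^ 2 := by rw [real_inner_comm]
      nlinarith [h2]
    have hl : Tendsto (fun τ : ℕ => 1 - ⟪w τ j, e j⟫ ^ 2) atTop (nhds 0) := by
      have h3 := (tendsto_const_nhds (x := (1:ℝ)) (f := atTop (α := ℕ))).sub (IH' j hj)
      simpa using h3
    exact squeeze_zero' (Eventually.of_forall fun τ => sq_nonneg _) hub hl
  have hji0 : ∀ j : Fin k, j < i →
      Tendsto (fun τ => ⟪w τ j, e i⟫ ^ 2) atTop (nhds 0) := by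
    intro j hj
    have hub : ∀ᶠ τ in atTop, ⟪w τ j, e i⟫ ^ 2 ≤ 1 - ⟪w τ j, e j⟫ ^ 2 := by
      filter_upwards [eventually_gt_atTop N] with τ hτ
      have h2 := aux_pair horth (w τ j) (a := i) (b := j) (ne_of_gt hj)
      rw [(hwon τ hτ).1 j] at h2
      have h3 : ⟪e i, w τ j⟫ ^ 2 = ⟪w τ j, e i⟫ ^ 2 := by rw [real_inner_comm]
      have h4 : ⟪e j, w τ j⟫ ^ 2 = ⟪w τ j, e j⟫ ^ 2 := by rw [real_inner_comm]
      nlinarith [h2]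
    have hl : Tendsto (fun τ : ℕ => 1 - ⟪w τ j, e j⟫ ^ 2) atTop (nhds 0) := by
      have h3 := (tendsto_const_nhds (x := (1:ℝ)) (f := atTop (α := ℕ))).sub (IH' j hj)
      simpa using h3
    exact squeeze_zero' (Eventually.of_forall fun τ => sq_nonneg _) hub hl
  have habs : ∀ j : Fin k, j < i →
      Tendsto (fun τ => |⟪w τ j, e i⟫|) atTop (nhds 0) := by
    intro j hj
    have h1 := (Real.continuous_sqrt.tendsto 0).comp (hji0 j hj)
    simp only [Function.comp_def, Real.sqrt_zero, Real.sqrt_sq_eq_abs] at h1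
    exact h1
  set u : ℕ → EuclideanSpace ℝ (Fin d) := fun τ =>
    v τ i - ∑ j ∈ Finset.univ.filter (· < i), ⟪w τ j, v τ i⟫ • w τ j with hudef
  have hvnorm0 : Tendsto (fun τ => ‖v τ i - e i‖) atTop (nhds 0) := by
    have h1 := (hvconv i).sub (tendsto_const_nhds (x := e i))
    rw [sub_self] at h1
    simpa using h1.norm
  have hterm : ∀ j ∈ Finset.univ.filter (· < i),
      Tendsto (fun τ => ⟪w τ j, v τ i⟫ • w τ j) atTop (nhds 0) := by
    intro j hjf
    have hj : j < i := by simpa using (Finset.mem_filter.1 hjf).2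
    apply squeeze_zero_norm' (a := fun τ => ‖v τ i - e i‖ + |⟪w τ j, e i⟫|)
    · filter_upwards [eventually_gt_atTop N] with τ hτ
      have hwn : ‖w τ j‖ = 1 := (hwon τ hτ).1 j
      have hsplit : ⟪w τ j, v τ i⟫ = ⟪w τ j, v τ i - e i⟫ + ⟪w τ j, e i⟫ := by
        rw [← inner_add_right, sub_add_cancel]
      have h5 : |⟪w τ j, v τ i⟫| ≤ ‖v τ i - e i‖ + |⟪w τ j, e i⟫| := by
        rw [hsplit]
        refine (abs_add_le _ _).trans ?_
        have h6 := abs_real_inner_le_norm (w τ j) (v τ i - e i)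
        rw [hwn, one_mul] at h6
        linarith
      rw [norm_smul, hwn, mul_one, Real.norm_eq_abs]
      exact h5
    · simpa using hvnorm0.add (habs j hj)
  have hu_tendsto : Tendsto u atTop (nhds (e i)) := by
    have hsum0 : Tendsto (fun τ => ∑ j ∈ Finset.univ.filter (· < i),
        ⟪w τ j, v τ i⟫ • w τ j) atTop (nhds 0) := by
      have h1 := tendsto_finset_sum (Finset.univ.filter (· < i)) hterm
      simpa using h1
    have h2 := (hvconv i).sub hsum0
    rw [sub_zero] at h2
    exact h2
  have hu_norm : Tendsto (fun τ => ‖u τ‖ ^ 2) atTop (nhds 1) := by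
    have h1 := (hu_tendsto.norm).pow 2
    rw [horth.1 i] at h1
    simpa using h1
  have hqu : Tendsto (fun τ => ⟪u τ, T (u τ)⟫) atTop (nhds (lam i)) := by
    have h1 := (hqcont.tendsto (e i)).comp hu_tendsto
    simp only [Function.comp_def] at h1
    have hq : ⟪e i, T (e i)⟫ = lam i := by
      rw [heig i, real_inner_smul_right, real_inner_self_eq_norm_sq, horth.1 i]
      norm_num
    rwa [hq] at h1
  have hlow : ∀ᶠ τ in atTop, ⟪u τ, T (u τ)⟫ ≤ μw τ i * ‖u τ‖ ^ 2 := by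
    filter_upwards [eventually_gt_atTop N] with τ hτ
    have humem : u τ ∈ S τ := by
      refine Submodule.sub_mem _ (hvS τ i) ?_
      exact Submodule.sum_mem _ fun j _ => Submodule.smul_mem _ _ (hwS τ hτ j)
    have horthu : ∀ j, j < i → ⟪w τ j, u τ⟫ = 0 := by
      intro j hj
      show ⟪w τ j, v τ i - ∑ j' ∈ Finset.univ.filter (· < i), ⟪w τ j', v τ i⟫ • w τ j'⟫ = 0
      rw [inner_sub_right, inner_sum]
      have hsum : ∑ j' ∈ Finset.univ.filter (· < i), ⟪w τ j, ⟪w τ j', v τ i⟫ • w τ j'⟫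
          = ⟪w τ j, v τ i⟫ := by
        rw [Finset.sum_eq_single j]
        · rw [real_inner_smul_right, real_inner_self_eq_norm_sq, (hwon τ hτ).1 j]
          norm_num
        · intro j' _ hne
          rw [real_inner_smul_right, (hwon τ hτ).2 (Ne.symm hne), mul_zero]
        · intro hji
          exact absurd (by simp [hj] : j ∈ Finset.univ.filter (· < i)) hji
      rw [hsum, sub_self]
    exact aux_rayleigh T hsym (hfinrank τ hτ) (hwon τ hτ) (hwS τ hτ) (hweig τ hτ)
      (hwmono τ hτ) i humem horthu
  set b : ℝ := if h : (i : ℕ) + 1 < k then lam ⟨(i : ℕ) + 1, h⟩ else mu with hbdef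
  have hmub : mu ≤ b := by
    rw [hbdef]
    by_cases hcase : (i : ℕ) + 1 < k
    · rw [dif_pos hcase]; exact (hsep _).le
    · rw [dif_neg hcase]
  have hblt : b < lam i := by
    rw [hbdef]
    by_cases hcase : (i : ℕ) + 1 < k
    · rw [dif_pos hcase]
      exact hstrict i ⟨(i : ℕ) + 1, hcase⟩ (by simp [Fin.lt_def])
    · rw [dif_neg hcase]; exact hsep i
  have hjb : ∀ j, i < j → lam j ≤ b := by
    intro j hij
    have h1 : (i : ℕ) + 1 ≤ (j : ℕ) := Nat.succ_le_of_lt (Fin.lt_def.1 hij)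
    have hcase : (i : ℕ) + 1 < k := lt_of_le_of_lt h1 j.isLt
    rw [hbdef, dif_pos hcase]
    rcases eq_or_lt_of_le h1 with heq | hlt
    · have hje : (⟨(i : ℕ) + 1, hcase⟩ : Fin k) = j := Fin.ext heq
      rw [hje]
    · exact (hstrict ⟨(i : ℕ) + 1, hcase⟩ j (by simpa [Fin.lt_def] using hlt)).le
  have hfilter : Finset.univ.filter (· ≤ i) = insert i (Finset.univ.filter (· < i)) := by
    ext j
    simp [le_iff_lt_or_eq, or_comm]
  have hup : ∀ᶠ τ in atTop, μw τ i ≤ b + (lam i - b) * ⟪w τ i, e i⟫ ^ 2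
      + ∑ j ∈ Finset.univ.filter (· < i), (lam j - b) * ⟪e j, w τ i⟫ ^ 2 := by
    filter_upwards [eventually_gt_atTop N] with τ hτ
    have hq := aux_qbound T lam mu e horth heig hsym hgap (w τ i) ((hwon τ hτ).1 i) i b hmub hjb
    rw [hfilter, Finset.sum_insert (by simp)] at hq
    have hcomm : ⟪e i, w τ i⟫ ^ 2 = ⟪w τ i, e i⟫ ^ 2 := by rw [real_inner_comm]
    rw [hcomm] at hq
    rw [hmuq τ hτ i]
    linarith
  have hGlim : Tendsto (fun τ => (⟪u τ, T (u τ)⟫ / ‖u τ‖ ^ 2 - b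
      - ∑ j ∈ Finset.univ.filter (· < i), (lam j - b) * ⟪e j, w τ i⟫ ^ 2) / (lam i - b))
      atTop (nhds 1) := by
    have hdiv : Tendsto (fun τ => ⟪u τ, T (u τ)⟫ / ‖u τ‖ ^ 2) atTop (nhds (lam i)) := by
      have h1 := hqu.div hu_norm one_ne_zero
      rw [div_one] at h1
      exact h1
    have hsum : Tendsto (fun τ => ∑ j ∈ Finset.univ.filter (· < i),
        (lam j - b) * ⟪e j, w τ i⟫ ^ 2) atTop (nhds 0) := by
      have h1 := tendsto_finset_sum (Finset.univ.filter (· < i))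
        (fun j hj => (hcj0 j (by simpa using (Finset.mem_filter.1 hj).2)).const_mul (lam j - b))
      simpa using h1
    have hnum := (hdiv.sub (tendsto_const_nhds (x := b))).sub hsum
    have h2 := hnum.div_const (lam i - b)
    rw [sub_zero, div_self (ne_of_gt (by linarith : (0:ℝ) < lam i - b))] at h2
    exact h2
  have hlower : ∀ᶠ τ in atTop, (⟪u τ, T (u τ)⟫ / ‖u τ‖ ^ 2 - b
      - ∑ j ∈ Finset.univ.filter (· < i), (lam j - b) * ⟪e j, w τ i⟫ ^ 2) / (lam i - b)
      ≤ ⟪w τ i, e i⟫ ^ 2 := by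
    have hpos : ∀ᶠ τ in atTop, 0 < ‖u τ‖ ^ 2 := hu_norm.eventually (eventually_gt_nhds one_pos)
    filter_upwards [hlow, hup, hpos] with τ h1 h2 h3
    rw [div_le_iff₀ (by linarith : (0:ℝ) < lam i - b)]
    have h4 : ⟪u τ, T (u τ)⟫ / ‖u τ‖ ^ 2 ≤ μw τ i := by
      rw [div_le_iff₀ h3]
      linarith
    nlinarith [h2, h4]
  have hupper : ∀ᶠ τ in atTop, ⟪w τ i, e i⟫ ^ 2 ≤ 1 := by
    filter_upwards [eventually_gt_atTop N] with τ hτ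
    have h1 := abs_real_inner_le_norm (w τ i) (e i)
    rw [(hwon τ hτ).1 i, horth.1 i, mul_one] at h1
    rw [← sq_abs]
    exact pow_le_one₀ (abs_nonneg _) h1
  exact tendsto_of_tendsto_of_tendsto_of_le_of_le' hGlim tendsto_const_nhds hlower hupper


/-- **Theorem 1, convergence of primed PCA.** Let `M` be a real symmetric
positive semidefinite `d × d` matrix whose `k` largest eigenvalues
`λ 0 > … > λ (k-1) > μ` are simple and strictly separated (with `μ` bounding the
Rayleigh quotient on the orthogonal complement of the top eigenvectors `e i`). If the
priming outputs are unit vectors `v τ i → e i` and `S τ = span (v τ 0, …, v τ (k-1))`,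
then there is `τ*` such that for all `τ > τ*` the subspace `S τ` is `k`-dimensional,
and for any family of orthonormal eigenvectors `w τ` of the compression of `M` to `S τ`
ordered by decreasing eigenvalues `μw τ` (the full-PCA output), one has
`⟪w τ i, e i⟫² → 1`; consequently for every threshold `0 < V < π/2` eventually the angle
between `w τ i` and `±e i` is below `V` for all `i`, so the full-PCA output attains the
maximal longest correct eigenvector streak `k`, which is at least the streak of the
priming output. -/
theorem primedPCA_convergence (d k : ℕ)
    (M : Matrix (Fin d) (Fin d) ℝ) (hM : M.PosSemidef)
    (lam : Fin k → ℝ) (mu : ℝ) (e : Fin k → EuclideanSpace ℝ (Fin d))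
    (horth : Orthonormal ℝ e)
    (heig : ∀ i : Fin k, Matrix.toEuclideanLin M (e i) = lam i • e i)
    (hstrict : ∀ i j : Fin k, i < j → lam j < lam i)
    (hsep : ∀ i : Fin k, mu < lam i)
    (hgap : ∀ w : EuclideanSpace ℝ (Fin d), (∀ i : Fin k, ⟪e i, w⟫ = 0) →
      ⟪w, Matrix.toEuclideanLin M w⟫ ≤ mu * ‖w‖ ^ 2)
    (v : ℕ → Fin k → EuclideanSpace ℝ (Fin d))
    (hvunit : ∀ (τ : ℕ) (i : Fin k), ‖v τ i‖ = 1)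
    (hvconv : ∀ i : Fin k, Tendsto (fun τ => v τ i) atTop (nhds (e i)))
    (S : ℕ → Submodule ℝ (EuclideanSpace ℝ (Fin d)))
    (hS : ∀ τ, S τ = Submodule.span ℝ (Set.range (v τ))) :
    ∃ τstar : ℕ,
      (∀ τ > τstar, Module.finrank ℝ (S τ) = k) ∧
      ∀ (w : ℕ → Fin k → EuclideanSpace ℝ (Fin d)) (μw : ℕ → Fin k → ℝ),
        (∀ τ > τstar,
          Orthonormal ℝ (w τ) ∧ (∀ i : Fin k, w τ i ∈ S τ) ∧
          (∀ i : Fin k,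
            (Submodule.orthogonalProjection (S τ) (Matrix.toEuclideanLin M (w τ i)) :
              EuclideanSpace ℝ (Fin d)) = μw τ i • w τ i) ∧
          (∀ i j : Fin k, i ≤ j → μw τ j ≤ μw τ i)) →
        (∀ i : Fin k, Tendsto (fun τ => ⟪w τ i, e i⟫ ^ 2) atTop (nhds 1)) ∧
        ∀ V : ℝ, 0 < V → V < Real.pi / 2 →
          ∃ τstarstar : ℕ, ∀ τ > τstarstar,
            (∀ i : Fin k,
              InnerProductGeometry.angle (w τ i) (e i) < V ∨
              InnerProductGeometry.angle (w τ i) (-(e i)) < V) ∧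
            longestCorrectStreak k V (w τ) e = k ∧
            longestCorrectStreak k V (v τ) e ≤ longestCorrectStreak k V (w τ) e := by
  classical
  set T : EuclideanSpace ℝ (Fin d) →ₗ[ℝ] EuclideanSpace ℝ (Fin d) :=
    (Matrix.toEuclideanLin M : _) with hTdef
  have hsym : ∀ x y : EuclideanSpace ℝ (Fin d), ⟪T x, y⟫ = ⟪x, T y⟫ :=
    Matrix.isHermitian_iff_isSymmetric.1 hM.1
  have hqcont : Continuous fun x : EuclideanSpace ℝ (Fin d) => ⟪x, T x⟫ :=
    continuous_id.inner T.continuous_of_finiteDimensional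
  -- τstar from linear independence
  have hvt : Tendsto v atTop (nhds e) := tendsto_pi_nhds.2 hvconv
  have hli : ∀ᶠ τ in atTop, LinearIndependent ℝ (v τ) :=
    hvt.eventually (isOpen_setOf_linearIndependent.eventually_mem horth.linearIndependent)
  obtain ⟨N, hN⟩ := eventually_atTop.1 hli
  have hfinrank : ∀ τ > N, Module.finrank ℝ (S τ) = k := by
    intro τ hτ
    rw [hS τ]
    simpa using finrank_span_eq_card (hN τ hτ.le)
  refine ⟨N, hfinrank, ?_⟩
  intro w μw hw
  have hwon : ∀ τ > N, Orthonormal ℝ (w τ) := fun τ h => (hw τ h).1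
  have hwS : ∀ τ > N, ∀ i, w τ i ∈ S τ := fun τ h => (hw τ h).2.1
  have hweig : ∀ τ > N, ∀ i,
      (Submodule.orthogonalProjection (S τ) (T (w τ i)) : EuclideanSpace ℝ (Fin d)) = μw τ i • w τ i :=
    fun τ h => (hw τ h).2.2.1
  have hwmono : ∀ τ > N, ∀ i j : Fin k, i ≤ j → μw τ j ≤ μw τ i := fun τ h => (hw τ h).2.2.2
  have hvS : ∀ τ, ∀ i, v τ i ∈ S τ := by
    intro τ i
    rw [hS τ]
    exact Submodule.subset_span ⟨i, rfl⟩
  -- eigenvalue equals Rayleigh quotient of w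
  have hmuq : ∀ τ > N, ∀ i, μw τ i = ⟪w τ i, T (w τ i)⟫ := by
    intro τ hτ i
    have h0 : ⟪T (w τ i) - (Submodule.orthogonalProjection (S τ) (T (w τ i)) :
        EuclideanSpace ℝ (Fin d)), w τ i⟫ = 0 :=
      Submodule.starProjection_inner_eq_zero (K := S τ) _ _ (hwS τ hτ i)
    rw [inner_sub_left, sub_eq_zero, hweig τ hτ i, real_inner_smul_left,
      real_inner_self_eq_norm_sq, (hwon τ hτ).1 i] at h0
    rw [← hsym, h0]
    norm_num
  have key := aux_key T hsym lam mu e horth heig hstrict hsep hgap v hvconv S hvS N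
    hfinrank w μw hwon hwS hweig hwmono hmuq hqcont
  have key' : ∀ i : Fin k, Tendsto (fun τ => ⟪w τ i, e i⟫ ^ 2) atTop (nhds 1) :=
    fun i => key (i : ℕ) i le_rfl
  refine ⟨key', ?_⟩
  intro V hV0 hVpi
  have hpi : 0 < Real.pi := Real.pi_pos
  have hcosV1 : Real.cos V < 1 := by
    have h1 := Real.cos_lt_cos_of_nonneg_of_le_pi (le_refl (0:ℝ)) (by linarith) hV0
    rwa [Real.cos_zero] at h1
  have hcos0 : 0 < Real.cos V := Real.cos_pos_of_mem_Ioo ⟨by linarith, hVpi⟩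
  have hsq : Real.cos V ^ 2 < 1 := by nlinarith
  have hangles : ∀ i : Fin k, ∀ᶠ τ in atTop,
      (InnerProductGeometry.angle (w τ i) (e i) < V ∨
       InnerProductGeometry.angle (w τ i) (-(e i)) < V) := by
    intro i
    filter_upwards [(key' i).eventually (eventually_gt_nhds hsq), eventually_gt_atTop N]
      with τ h1 hτ
    have hwn : ‖w τ i‖ = 1 := (hwon τ hτ).1 i
    have habs2 : Real.cos V < |⟪w τ i, e i⟫| := by
      have h2 : Real.cos V ^ 2 < |⟪w τ i, e i⟫| ^ 2 := by rwa [sq_abs]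
      exact lt_of_pow_lt_pow_left₀ 2 (abs_nonneg _) h2
    rcases le_or_gt 0 ⟪w τ i, e i⟫ with hs | hs
    · left
      refine aux_angle hwn (horth.1 i) hV0.le (by linarith) ?_
      rwa [abs_of_nonneg hs] at habs2
    · right
      refine aux_angle hwn (by rw [norm_neg]; exact horth.1 i) hV0.le (by linarith) ?_
      rw [inner_neg_right]
      rw [abs_of_neg hs] at habs2
      linarith
  have hall : ∀ᶠ τ in atTop, ∀ i : Fin k,
      (InnerProductGeometry.angle (w τ i) (e i) < V ∨
       InnerProductGeometry.angle (w τ i) (-(e i)) < V) := eventually_all.2 hangles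
  obtain ⟨N2, hN2⟩ := eventually_atTop.1 hall
  refine ⟨N2, fun τ hτ => ?_⟩
  have hcond := hN2 τ hτ.le
  have hw_eq : longestCorrectStreak k V (w τ) e = k := by
    unfold longestCorrectStreak
    have hkmem : k ∈ {m | m ≤ k ∧ ∀ i : Fin k, (i : ℕ) < m →
        (InnerProductGeometry.angle (w τ i) (e i) < V ∨
         InnerProductGeometry.angle (w τ i) (-(e i)) < V)} := ⟨le_rfl, fun i _ => hcond i⟩
    exact le_antisymm (csSup_le ⟨k, hkmem⟩ fun m hm => hm.1)
      (le_csSup ⟨k, fun m hm => hm.1⟩ hkmem)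
  refine ⟨hcond, hw_eq, ?_⟩
  rw [hw_eq]
  unfold longestCorrectStreak
  exact csSup_le ⟨0, ⟨Nat.zero_le k, fun i h => absurd h (Nat.not_lt_zero _)⟩⟩ fun m hm => hm.1
end

section
/- Under the hypotheses of Theorem 1 (real symmetric positive semidefinite M with λ₁ > λ₂ > … > λ_k > λ_{k+1} and orthonormal eigenvectors e₁, …, e_k; unit vectors v_i(τ) → e_i; S(τ) = span(v₁(τ), …, v_k(τ))), the eigenvalue estimates of primed PCA converge to the true eigenvalues: for each i ≤ k, the i-th largest eigenvalue of the compression P_{S(τ)} M P_{S(τ)} of M to S(τ) converges to λ_i as τ → ∞. -/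
open scoped RealInnerProductSpace
open Filter Submodule Set Module

section Aux

variable {d k : ℕ}

lemma psd_inner (M : Matrix (Fin d) (Fin d) ℝ) (hM : M.PosSemidef)
    (x : EuclideanSpace ℝ (Fin d)) :
    0 ≤ ⟪x, Matrix.toEuclideanLin M x⟫ := by
  have := hM.re_dotProduct_nonneg (WithLp.equiv 2 _ x)
  simpa [dotProduct, PiLp.inner_apply, Matrix.toEuclideanLin_apply,
    Matrix.mulVec, mul_comm] using this

/-- Quadratic-form expansion on the span of an orthonormal family. -/
lemma quad_form_span {m : ℕ} (f : Fin m → EuclideanSpace ℝ (Fin d)) (ν : Fin m → ℝ)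
    (hf : Orthonormal ℝ f) (T : EuclideanSpace ℝ (Fin d) →ₗ[ℝ] EuclideanSpace ℝ (Fin d))
    (x : EuclideanSpace ℝ (Fin d)) (hx : x ∈ span ℝ (range f))
    (hT : ∀ j, ⟪x, T (f j)⟫ = ν j * ⟪f j, x⟫) :
    ⟪x, T x⟫ = ∑ j, ν j * ⟪f j, x⟫ ^ 2 ∧ ‖x‖ ^ 2 = ∑ j, ⟪f j, x⟫ ^ 2 := by
  obtain ⟨c, rfl⟩ := (mem_span_range_iff_exists_fun ℝ).mp hx
  have hc : ∀ j, ⟪f j, ∑ i, c i • f i⟫ = c j := by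
    intro j
    rw [hf.inner_right_sum c (Finset.mem_univ j)]
  constructor
  · rw [map_sum, inner_sum]
    simp_rw [map_smul, real_inner_smul_right, hT, hc]
    exact Finset.sum_congr rfl fun j _ => by ring
  · have := hf.inner_sum c c Finset.univ
    rw [← real_inner_self_eq_norm_sq]
    simp_rw [hc, this, sq]
    norm_num

lemma quad_lower {m : ℕ} (f : Fin m → EuclideanSpace ℝ (Fin d)) (ν : Fin m → ℝ)
    (hf : Orthonormal ℝ f) (T : EuclideanSpace ℝ (Fin d) →ₗ[ℝ] EuclideanSpace ℝ (Fin d))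
    (x : EuclideanSpace ℝ (Fin d)) (hx : x ∈ span ℝ (range f))
    (hT : ∀ j, ⟪x, T (f j)⟫ = ν j * ⟪f j, x⟫) (a : ℝ) (ha : ∀ j, a ≤ ν j) :
    a * ‖x‖ ^ 2 ≤ ⟪x, T x⟫ := by
  obtain ⟨h1, h2⟩ := quad_form_span f ν hf T x hx hT
  rw [h1, h2, Finset.mul_sum]
  exact Finset.sum_le_sum fun j _ => mul_le_mul_of_nonneg_right (ha j) (sq_nonneg _)

lemma quad_upper {m : ℕ} (f : Fin m → EuclideanSpace ℝ (Fin d)) (ν : Fin m → ℝ)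
    (hf : Orthonormal ℝ f) (T : EuclideanSpace ℝ (Fin d) →ₗ[ℝ] EuclideanSpace ℝ (Fin d))
    (x : EuclideanSpace ℝ (Fin d)) (hx : x ∈ span ℝ (range f))
    (hT : ∀ j, ⟪x, T (f j)⟫ = ν j * ⟪f j, x⟫) (a : ℝ) (ha : ∀ j, ν j ≤ a) :
    ⟪x, T x⟫ ≤ a * ‖x‖ ^ 2 := by
  obtain ⟨h1, h2⟩ := quad_form_span f ν hf T x hx hT
  rw [h1, h2, Finset.mul_sum]
  exact Finset.sum_le_sum fun j _ => mul_le_mul_of_nonneg_right (ha j) (sq_nonneg _)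

/-- Rayleigh upper bound on the subspace orthogonal to the top `i` eigenvectors. -/
lemma gap_bound (T : EuclideanSpace ℝ (Fin d) →ₗ[ℝ] EuclideanSpace ℝ (Fin d))
    (hsymm : ∀ x y, ⟪T x, y⟫ = ⟪x, T y⟫)
    (lam : Fin k → ℝ) (mu : ℝ) (e : Fin k → EuclideanSpace ℝ (Fin d))
    (horth : Orthonormal ℝ e) (heig : ∀ i, T (e i) = lam i • e i)
    (hmono : ∀ i j : Fin k, i ≤ j → lam j ≤ lam i) (hsep : ∀ i, mu ≤ lam i)
    (hgap : ∀ z : EuclideanSpace ℝ (Fin d), (∀ i : Fin k, ⟪e i, z⟫ = 0) →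
      ⟪z, T z⟫ ≤ mu * ‖z‖ ^ 2)
    (i : Fin k) (x : EuclideanSpace ℝ (Fin d)) (hx : ∀ j : Fin k, j < i → ⟪e j, x⟫ = 0) :
    ⟪x, T x⟫ ≤ lam i * ‖x‖ ^ 2 := by
  set p : EuclideanSpace ℝ (Fin d) := ∑ j, ⟪e j, x⟫ • e j with hp
  set z : EuclideanSpace ℝ (Fin d) := x - p with hz
  have hez : ∀ j, ⟪e j, z⟫ = 0 := by
    intro j
    have : ⟪e j, p⟫ = ⟪e j, x⟫ := by
      rw [hp, horth.inner_right_sum _ (Finset.mem_univ j)]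
    rw [hz, inner_sub_right, this, sub_self]
  have hxpz : x = p + z := by rw [hz]; abel
  have hTp : T p = ∑ j, (lam j * ⟪e j, x⟫) • e j := by
    rw [hp, map_sum]
    exact Finset.sum_congr rfl fun j _ => by rw [map_smul, heig j, smul_smul, mul_comm]
  have hpz : ⟪p, z⟫ = 0 := by
    rw [hp, sum_inner]
    refine Finset.sum_eq_zero fun j _ => ?_
    rw [real_inner_smul_left, hez, mul_zero]
  have hpTz : ⟪p, T z⟫ = 0 := by
    rw [← hsymm, hTp, sum_inner]
    refine Finset.sum_eq_zero fun j _ => ?_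
    rw [real_inner_smul_left, hez, mul_zero]
  have hzTp : ⟪z, T p⟫ = 0 := by
    rw [hTp, inner_sum]
    refine Finset.sum_eq_zero fun j _ => ?_
    rw [real_inner_smul_right]
    exact mul_eq_zero_of_right _ (by rw [real_inner_comm]; exact hez j)
  have hpTp : ⟪p, T p⟫ = ∑ j, lam j * ⟪e j, x⟫ ^ 2 := by
    rw [hTp, inner_sum]
    simp_rw [real_inner_smul_right, hp]
    refine Finset.sum_congr rfl fun j _ => ?_
    rw [horth.inner_left_sum _ (Finset.mem_univ j)]
    simp only [starRingEnd_apply, star_trivial]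
    ring
  have hnp : ‖p‖ ^ 2 = ∑ j, ⟪e j, x⟫ ^ 2 := by
    rw [← real_inner_self_eq_norm_sq, hp, horth.inner_sum]
    simp [sq]
  have hnx : ‖x‖ ^ 2 = ‖p‖ ^ 2 + ‖z‖ ^ 2 := by
    rw [hxpz, ← real_inner_self_eq_norm_sq, real_inner_add_add_self, hpz,
      real_inner_self_eq_norm_sq, real_inner_self_eq_norm_sq]
    ring
  have key : ⟪x, T x⟫ = ⟪p, T p⟫ + ⟪z, T z⟫ := by
    rw [hxpz, map_add, inner_add_left, inner_add_right, inner_add_right, hpTz, hzTp]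
    ring
  have h1 : ∑ j, lam j * ⟪e j, x⟫ ^ 2 ≤ lam i * ∑ j, ⟪e j, x⟫ ^ 2 := by
    rw [Finset.mul_sum]
    refine Finset.sum_le_sum fun j _ => ?_
    rcases lt_or_ge j i with hj | hj
    · rw [hx j hj]; simp
    · exact mul_le_mul_of_nonneg_right (hmono i j hj) (sq_nonneg _)
  have h2 : ⟪z, T z⟫ ≤ lam i * ‖z‖ ^ 2 :=
    (hgap z hez).trans (mul_le_mul_of_nonneg_right (hsep i) (sq_nonneg _))
  rw [key, hpTp, hnx, hnp, mul_add]
  exact add_le_add h1 h2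

lemma dim_inter (A B S' : Submodule ℝ (EuclideanSpace ℝ (Fin d))) (hA : A ≤ S') (hB : B ≤ S')
    (h : finrank ℝ S' < finrank ℝ A + finrank ℝ B) : ∃ x, x ≠ 0 ∧ x ∈ A ⊓ B := by
  have h1 := Submodule.finrank_sup_add_finrank_inf_eq A B
  have h2 : finrank ℝ ↥(A ⊔ B) ≤ finrank ℝ S' := Submodule.finrank_mono (sup_le hA hB)
  have h3 : 0 < finrank ℝ ↥(A ⊓ B) := by omega
  have h4 : A ⊓ B ≠ ⊥ := by
    intro hbot
    rw [hbot, finrank_bot] at h3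
    exact lt_irrefl 0 h3
  obtain ⟨x, hx, hx0⟩ := Submodule.exists_mem_ne_zero_of_ne_bot h4
  exact ⟨x, hx0, hx⟩

noncomputable def Lmap (e v' : Fin k → EuclideanSpace ℝ (Fin d)) :
    EuclideanSpace ℝ (Fin d) →ₗ[ℝ] EuclideanSpace ℝ (Fin d) :=
  LinearMap.id + ∑ j, LinearMap.smulRight (innerₛₗ ℝ (e j)) (v' j - e j)

lemma Lmap_apply (e v' : Fin k → EuclideanSpace ℝ (Fin d)) (x : EuclideanSpace ℝ (Fin d)) :
    Lmap e v' x = x + ∑ j, ⟪e j, x⟫ • (v' j - e j) := by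
  simp [Lmap, LinearMap.sum_apply]

lemma Lmap_basis (e v' : Fin k → EuclideanSpace ℝ (Fin d)) (horth : Orthonormal ℝ e)
    (m : Fin k) : Lmap e v' (e m) = v' m := by
  rw [Lmap_apply]
  have h1 : (∑ j, ⟪e j, e m⟫ • (v' j - e j)) = v' m - e m := by
    rw [Finset.sum_congr rfl (fun j _ => by rw [orthonormal_iff_ite.mp horth j m])]
    simp [ite_smul]
  rw [h1, add_sub_cancel]

lemma Lmap_dist (e v' : Fin k → EuclideanSpace ℝ (Fin d)) (horth : Orthonormal ℝ e)
    (x : EuclideanSpace ℝ (Fin d)) :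
    ‖Lmap e v' x - x‖ ≤ (∑ j, ‖v' j - e j‖) * ‖x‖ := by
  rw [Lmap_apply, add_sub_cancel_left]
  refine (norm_sum_le _ _).trans ?_
  rw [Finset.sum_mul]
  refine Finset.sum_le_sum fun j _ => ?_
  rw [norm_smul]
  calc ‖⟪e j, x⟫‖ * ‖v' j - e j‖ ≤ (‖e j‖ * ‖x‖) * ‖v' j - e j‖ :=
        mul_le_mul_of_nonneg_right (norm_inner_le_norm _ _) (norm_nonneg _)
    _ = ‖v' j - e j‖ * ‖x‖ := by rw [horth.1 j]; ring

lemma Lmap_inj (e v' : Fin k → EuclideanSpace ℝ (Fin d)) (horth : Orthonormal ℝ e)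
    (hη : ∑ j, ‖v' j - e j‖ < 1) : Function.Injective (Lmap e v') := by
  rw [← LinearMap.ker_eq_bot, Submodule.eq_bot_iff]
  intro x hx
  rw [LinearMap.mem_ker] at hx
  have h := Lmap_dist e v' horth x
  rw [hx, zero_sub, norm_neg] at h
  by_contra h0
  have hn : 0 < ‖x‖ := norm_pos_iff.mpr h0
  nlinarith [h, hη, hn]

lemma eta_tendsto (e : Fin k → EuclideanSpace ℝ (Fin d))
    (v : ℕ → Fin k → EuclideanSpace ℝ (Fin d))
    (hvconv : ∀ i, Tendsto (fun τ => v τ i) atTop (nhds (e i))) :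
    Tendsto (fun τ => ∑ j, ‖v τ j - e j‖) atTop (nhds 0) := by
  have h : Tendsto (fun τ => ∑ j : Fin k, ‖v τ j - e j‖) atTop (nhds (∑ j : Fin k, (0:ℝ))) := by
    refine tendsto_finset_sum _ fun j _ => ?_
    have h1 : Tendsto (fun τ => v τ j - e j) atTop (nhds 0) := by
      simpa using (hvconv j).sub (tendsto_const_nhds (x := e j))
    simpa using h1.norm
  simpa using h

lemma rayleigh_perturb (T : EuclideanSpace ℝ (Fin d) →ₗ[ℝ] EuclideanSpace ℝ (Fin d))
    (C : ℝ) (hC : ∀ z, ‖T z‖ ≤ C * ‖z‖) (x y : EuclideanSpace ℝ (Fin d)) :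
    |⟪x, T x⟫ - ⟪y, T y⟫| ≤ C * (‖x‖ + ‖y‖) * ‖x - y‖ := by
  have key : ⟪x, T x⟫ - ⟪y, T y⟫ = ⟪x - y, T x⟫ + ⟪y, T (x - y)⟫ := by
    rw [map_sub, inner_sub_left, inner_sub_right]
    ring
  rw [key]
  have h1 : |⟪x - y, T x⟫| ≤ ‖x - y‖ * (C * ‖x‖) :=
    (abs_real_inner_le_norm _ _).trans
      (mul_le_mul_of_nonneg_left (hC x) (norm_nonneg _))
  have h2 : |⟪y, T (x - y)⟫| ≤ ‖y‖ * (C * ‖x - y‖) :=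
    (abs_real_inner_le_norm _ _).trans
      (mul_le_mul_of_nonneg_left (hC _) (norm_nonneg _))
  calc |⟪x - y, T x⟫ + ⟪y, T (x - y)⟫| ≤ |⟪x - y, T x⟫| + |⟪y, T (x - y)⟫| := abs_add_le _ _
    _ ≤ ‖x - y‖ * (C * ‖x‖) + ‖y‖ * (C * ‖x - y‖) := add_le_add h1 h2
    _ = C * (‖x‖ + ‖y‖) * ‖x - y‖ := by ring

noncomputable def compOp (T : EuclideanSpace ℝ (Fin d) →ₗ[ℝ] EuclideanSpace ℝ (Fin d))
    (S : Submodule ℝ (EuclideanSpace ℝ (Fin d))) : ↥S →ₗ[ℝ] ↥S :=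
  (orthogonalProjection S).toLinearMap ∘ₗ T ∘ₗ S.subtype

lemma compOp_symm (T : EuclideanSpace ℝ (Fin d) →ₗ[ℝ] EuclideanSpace ℝ (Fin d))
    (hsymm : ∀ x y, ⟪T x, y⟫ = ⟪x, T y⟫) (S : Submodule ℝ (EuclideanSpace ℝ (Fin d))) :
    (compOp T S).IsSymmetric := by
  intro x y
  show ⟪orthogonalProjection S (T ↑x), y⟫ = ⟪x, orthogonalProjection S (T ↑y)⟫
  rw [inner_orthogonalProjection_eq_of_mem_right, inner_orthogonalProjection_eq_of_mem_left]
  exact hsymm ↑x ↑y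

/-- Rayleigh quotient lower bound on the perturbed top-`i+1` subspace. -/
lemma scalar_est (lami ε C η nx ny qx qy dxy : ℝ)
    (hε : 0 < ε)
    (hc : 0 < lami - ε) (hC : 0 ≤ C) (hη0 : 0 ≤ η) (hη1 : η ≤ 1)
    (hηε : 3 * η * (lami + C) ≤ ε)
    (hyR : lami * ny ^ 2 ≤ qy)
    (h5 : qy - qx ≤ C * (nx + ny) * dxy)
    (hdist : dxy ≤ η * ny)
    (hxny : nx ≤ ny + η * ny)
    (hnx : 0 ≤ nx) (hny : 0 ≤ ny) (hd : 0 ≤ dxy) :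
    (lami - ε) * nx ^ 2 ≤ qx := by
  have ha : nx + ny ≤ 3 * ny := by nlinarith
  have hb : C * (nx + ny) * dxy ≤ C * (3 * ny) * (η * ny) := by
    have h1 : 0 ≤ nx + ny := by linarith
    have h2 : C * (nx + ny) ≤ C * (3 * ny) := mul_le_mul_of_nonneg_left ha hC
    have h3 : 0 ≤ C * (3 * ny) := by positivity
    exact mul_le_mul h2 hdist hd h3
  have h7 : lami * ny ^ 2 - 3 * C * η * ny ^ 2 ≤ qx := by nlinarith
  have hsq : nx * nx ≤ (ny + η * ny) * (ny + η * ny) :=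
    mul_le_mul hxny hxny hnx (by positivity)
  have h8 : nx ^ 2 ≤ (1 + 3 * η) * ny ^ 2 := by
    nlinarith [mul_nonneg (mul_nonneg hη0 (sub_nonneg.mpr hη1)) (sq_nonneg ny)]
  have h9 : (lami - ε) * nx ^ 2 ≤ (lami - ε) * ((1 + 3 * η) * ny ^ 2) :=
    mul_le_mul_of_nonneg_left h8 (le_of_lt hc)
  have hs : (lami - ε) * (1 + 3 * η) ≤ lami - 3 * C * η := by
    nlinarith [mul_nonneg hη0 hε.le]
  have h10 := mul_le_mul_of_nonneg_right hs (sq_nonneg ny)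
  nlinarith [h9, h10, h7]

/-- Rayleigh quotient lower bound on the perturbed top-`i+1` subspace. -/
lemma mapped_lower (T : EuclideanSpace ℝ (Fin d) →ₗ[ℝ] EuclideanSpace ℝ (Fin d))
    (hpsd : ∀ z, 0 ≤ ⟪z, T z⟫) (C : ℝ) (hC0 : 0 ≤ C) (hC : ∀ z, ‖T z‖ ≤ C * ‖z‖)
    (lam : Fin k → ℝ) (e : Fin k → EuclideanSpace ℝ (Fin d)) (horth : Orthonormal ℝ e)
    (heig : ∀ m, T (e m) = lam m • e m)
    (hmono : ∀ p q : Fin k, p ≤ q → lam q ≤ lam p)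
    (i : Fin k) (v' : Fin k → EuclideanSpace ℝ (Fin d)) (ε : ℝ) (hε : 0 < ε)
    (hη1 : ∑ j, ‖v' j - e j‖ ≤ 1)
    (hηε : 3 * (∑ j, ‖v' j - e j‖) * (lam i + C) ≤ ε)
    (x : EuclideanSpace ℝ (Fin d))
    (hx : x ∈ Submodule.map (Lmap e v')
      (span ℝ (range (fun j : Fin (↑i + 1) => e (Fin.castLE i.isLt j))))) :
    (lam i - ε) * ‖x‖ ^ 2 ≤ ⟪x, T x⟫ := by
  obtain ⟨y, hy, rfl⟩ := hx
  set η : ℝ := ∑ j, ‖v' j - e j‖ with hηd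
  have hη0 : 0 ≤ η := Finset.sum_nonneg fun j _ => norm_nonneg _
  have hyR : lam i * ‖y‖ ^ 2 ≤ ⟪y, T y⟫ := by
    refine quad_lower _ (fun j => lam (Fin.castLE i.isLt j))
      (horth.comp _ (Fin.strictMono_castLE i.isLt).injective) T y hy ?_ (lam i) ?_
    · intro j
      show ⟪y, T (e (Fin.castLE i.isLt j))⟫ = lam (Fin.castLE i.isLt j) * ⟪e (Fin.castLE i.isLt j), y⟫
      rw [heig, real_inner_smul_right, real_inner_comm]
    · intro j
      refine hmono _ i ?_
      exact Fin.mk_le_mk.mpr (Nat.lt_succ_iff.mp j.isLt)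
  have hperturb := rayleigh_perturb T C hC (Lmap e v' y) y
  have h5 : ⟪y, T y⟫ - ⟪Lmap e v' y, T (Lmap e v' y)⟫ ≤
      C * (‖Lmap e v' y‖ + ‖y‖) * ‖Lmap e v' y - y‖ := by
    have := (abs_le.mp hperturb).1
    linarith
  have hdist : ‖Lmap e v' y - y‖ ≤ η * ‖y‖ := Lmap_dist e v' horth y
  have hxny : ‖Lmap e v' y‖ ≤ ‖y‖ + η * ‖y‖ := by
    have h6 := norm_sub_norm_le (Lmap e v' y) y
    linarith
  rcases le_or_gt (lam i - ε) 0 with hc | hc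
  · have h7 : (lam i - ε) * ‖Lmap e v' y‖ ^ 2 ≤ 0 :=
      mul_nonpos_of_nonpos_of_nonneg hc (sq_nonneg _)
    linarith [hpsd (Lmap e v' y)]
  · exact scalar_est (lam i) ε C η ‖Lmap e v' y‖ ‖y‖ _ _ ‖Lmap e v' y - y‖ hε hc hC0 hη0 hη1
      hηε hyR h5 hdist hxny (norm_nonneg _) (norm_nonneg _) (norm_nonneg _)

end Aux

set_option maxHeartbeats 2000000 in
/-- Under the hypotheses of Theorem 1 (real symmetric positive
semidefinite `M` with simple, strictly separated top-`k` eigenvalues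
`λ 0 > … > λ (k-1) > μ` and orthonormal eigenvectors `e i`; unit priming vectors
`v τ i → e i`; `S τ = span (v τ)`), the eigenvalue estimates of primed PCA converge to
the true eigenvalues: eventually the compression of `M` to `S τ` admits an orthonormal
eigenbasis with decreasingly ordered eigenvalues, and for any such family the `i`-th
largest eigenvalue of the compression tends to `λ i`. -/
theorem primedPCA_eigenvalue_convergence (d k : ℕ)
    (M : Matrix (Fin d) (Fin d) ℝ) (hM : M.PosSemidef)
    (lam : Fin k → ℝ) (mu : ℝ) (e : Fin k → EuclideanSpace ℝ (Fin d))
    (horth : Orthonormal ℝ e)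
    (heig : ∀ i : Fin k, Matrix.toEuclideanLin M (e i) = lam i • e i)
    (hstrict : ∀ i j : Fin k, i < j → lam j < lam i)
    (hsep : ∀ i : Fin k, mu < lam i)
    (hgap : ∀ w : EuclideanSpace ℝ (Fin d), (∀ i : Fin k, ⟪e i, w⟫ = 0) →
      ⟪w, Matrix.toEuclideanLin M w⟫ ≤ mu * ‖w‖ ^ 2)
    (v : ℕ → Fin k → EuclideanSpace ℝ (Fin d))
    (hvunit : ∀ (τ : ℕ) (i : Fin k), ‖v τ i‖ = 1)
    (hvconv : ∀ i : Fin k, Tendsto (fun τ => v τ i) atTop (nhds (e i)))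
    (S : ℕ → Submodule ℝ (EuclideanSpace ℝ (Fin d)))
    (hS : ∀ τ, S τ = Submodule.span ℝ (Set.range (v τ))) :
    (∀ᶠ τ : ℕ in atTop, ∃ (w : Fin k → EuclideanSpace ℝ (Fin d)) (μw : Fin k → ℝ),
      Orthonormal ℝ w ∧ (∀ i : Fin k, w i ∈ S τ) ∧
      (∀ i : Fin k,
        (Submodule.orthogonalProjectionOnto (S τ) (Matrix.toEuclideanLin M (w i)) :
          EuclideanSpace ℝ (Fin d)) = μw i • w i) ∧
      (∀ i j : Fin k, i ≤ j → μw j ≤ μw i)) ∧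
    ∀ (w : ℕ → Fin k → EuclideanSpace ℝ (Fin d)) (μw : ℕ → Fin k → ℝ),
      (∀ᶠ τ : ℕ in atTop,
        Orthonormal ℝ (w τ) ∧ (∀ i : Fin k, w τ i ∈ S τ) ∧
        (∀ i : Fin k,
          (Submodule.orthogonalProjectionOnto (S τ) (Matrix.toEuclideanLin M (w τ i)) :
            EuclideanSpace ℝ (Fin d)) = μw τ i • w τ i) ∧
        (∀ i j : Fin k, i ≤ j → μw τ j ≤ μw τ i)) →
      ∀ i : Fin k, Tendsto (fun τ => μw τ i) atTop (nhds (lam i)) := by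
  classical
  set T : EuclideanSpace ℝ (Fin d) →ₗ[ℝ] EuclideanSpace ℝ (Fin d) :=
    Matrix.toEuclideanLin M with hTdef
  have hsymm : ∀ x y, ⟪T x, y⟫ = ⟪x, T y⟫ :=
    fun x y => (Matrix.isHermitian_iff_isSymmetric.mp hM.isHermitian) x y
  have hpsd : ∀ x, 0 ≤ ⟪x, T x⟫ := psd_inner M hM
  have hmono : ∀ p q : Fin k, p ≤ q → lam q ≤ lam p := by
    intro p q hpq
    rcases eq_or_lt_of_le hpq with h | h
    · rw [h]
    · exact (hstrict p q h).le
  have hlam0 : ∀ i, 0 ≤ lam i := by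
    intro i
    have h1 : ⟪e i, T (e i)⟫ = lam i := by
      rw [heig i, real_inner_smul_right, real_inner_self_eq_norm_sq, horth.1 i]
      norm_num
    linarith [hpsd (e i)]
  set Tc : EuclideanSpace ℝ (Fin d) →L[ℝ] EuclideanSpace ℝ (Fin d) :=
    LinearMap.toContinuousLinearMap T with hTcdef
  set C : ℝ := ‖Tc‖ with hCdef
  have hC0 : 0 ≤ C := norm_nonneg _
  have hCb : ∀ z, ‖T z‖ ≤ C * ‖z‖ := by
    intro z
    have h := Tc.le_opNorm z
    rw [show Tc z = T z from rfl] at h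
    exact h
  set η : ℕ → ℝ := fun τ => ∑ j, ‖v τ j - e j‖ with hηdef
  have hη0 : ∀ τ, 0 ≤ η τ := fun τ => Finset.sum_nonneg fun j _ => norm_nonneg _
  have hηt : Tendsto η atTop (nhds 0) := eta_tendsto e v hvconv
  have hsmall : ∀ c, 0 < c → ∀ᶠ τ in atTop, η τ < c :=
    fun c hc => hηt.eventually_lt_const hc
  have hmapfull : ∀ τ, Submodule.map (Lmap e (v τ)) (span ℝ (range e)) = S τ := by
    intro τ
    rw [Submodule.map_span, ← Set.range_comp]
    have h : (Lmap e (v τ)) ∘ e = v τ := funext (Lmap_basis e (v τ) horth)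
    rw [h, hS τ]
  have hSrank : ∀ τ, η τ < 1 → finrank ℝ (S τ) = k := by
    intro τ hτ
    have hinj := Lmap_inj e (v τ) horth hτ
    have h1 := (Submodule.equivMapOfInjective _ hinj (span ℝ (range e))).finrank_eq
    rw [← hmapfull τ, ← h1, finrank_span_eq_card horth.linearIndependent, Fintype.card_fin]
  -- the inner product against T can be computed through the projection, for x in S τ
  have hprojinner : ∀ (τ : ℕ) (x : EuclideanSpace ℝ (Fin d)) (_ : x ∈ S τ)
      (u : EuclideanSpace ℝ (Fin d)),
      ⟪x, u⟫ = ⟪x, (orthogonalProjection (S τ) u : EuclideanSpace ℝ (Fin d))⟫ := by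
    intro τ x hx u
    have h := inner_orthogonalProjection_eq_of_mem_left (K := S τ) ⟨x, hx⟩ u
    rw [Submodule.coe_inner] at h
    exact h.symm
  constructor
  · -- Part 1 : existence of ordered orthonormal eigenbasis of the compression
    filter_upwards [hsmall 1 one_pos] with τ hτ
    have hrk : finrank ℝ (S τ) = k := hSrank τ hτ
    have hsymS := compOp_symm T hsymm (S τ)
    set b := hsymS.eigenvectorBasis hrk with hbdef
    set ν := hsymS.eigenvalues hrk with hνdef
    have hb : ∀ m, compOp T (S τ) (b m) = ν m • b m :=
      fun m => hsymS.apply_eigenvectorBasis hrk m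
    set σ := Tuple.sort (fun m => -ν m) with hσdef
    refine ⟨fun i => ↑(b (σ i)), fun i => ν (σ i), ?_, fun i => (b (σ i)).2, ?_, ?_⟩
    · rw [orthonormal_iff_ite]
      intro i j
      have hbo := b.orthonormal
      rw [orthonormal_iff_ite] at hbo
      rw [← Submodule.coe_inner, hbo]
      simp [σ.injective.eq_iff]
    · intro i
      have h2 : ((compOp T (S τ) (b (σ i)) : ↥(S τ)) : EuclideanSpace ℝ (Fin d)) =
          ((ν (σ i) • b (σ i) : ↥(S τ)) : EuclideanSpace ℝ (Fin d)) := congrArg _ (hb (σ i))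
      simpa [compOp] using h2
    · intro i j hij
      have h3 := Tuple.monotone_sort (fun m => -ν m) hij
      simpa using h3
  · -- Part 2 : convergence of the ordered eigenvalue estimates
    intro w μw hw i
    -- eventual upper bound : μw τ i ≤ lam i
    have hub : ∀ᶠ τ in atTop, μw τ i ≤ lam i := by
      filter_upwards [hsmall 1 one_pos, hw] with τ hτ1 hτw
      obtain ⟨hwo, hwS, hweig, hword⟩ := hτw
      have hrk : finrank ℝ (S τ) = k := hSrank τ hτ1
      set fl : Fin (↑i + 1) → Fin k := fun j => Fin.castLE i.isLt j with hfl
      set fe : Fin (↑i : ℕ) → Fin k := fun j => Fin.castLE i.isLt.le j with hfe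
      set A : Submodule ℝ (EuclideanSpace ℝ (Fin d)) :=
        span ℝ (range (w τ ∘ fl)) with hA
      set W : Submodule ℝ (EuclideanSpace ℝ (Fin d)) :=
        span ℝ (range (e ∘ fe)) with hW
      set B : Submodule ℝ (EuclideanSpace ℝ (Fin d)) := S τ ⊓ Wᗮ with hB
      have hAS : A ≤ S τ := by
        rw [hA, span_le]
        rintro - ⟨j, rfl⟩
        exact hwS _
      have hArank : finrank ℝ A = ↑i + 1 := by
        rw [hA, finrank_span_eq_card
          ((hwo.comp fl (Fin.strictMono_castLE i.isLt).injective).linearIndependent),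
          Fintype.card_fin]
      have hWrank : finrank ℝ W = ↑i := by
        rw [hW, finrank_span_eq_card
          ((horth.comp fe (Fin.strictMono_castLE i.isLt.le).injective).linearIndependent),
          Fintype.card_fin]
      have hWo : finrank ℝ W + finrank ℝ Wᗮ = d := by
        rw [Submodule.finrank_add_finrank_orthogonal]
        exact finrank_euclideanSpace_fin
      have hsupB := Submodule.finrank_sup_add_finrank_inf_eq (S τ) Wᗮ
      have hsupBle : finrank ℝ ↥(S τ ⊔ Wᗮ) ≤ d := by
        have := Submodule.finrank_le (S τ ⊔ Wᗮ)
        rwa [finrank_euclideanSpace_fin] at this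
      have hik : (↑i : ℕ) < k := i.isLt
      have hdim : finrank ℝ (S τ) < finrank ℝ A + finrank ℝ B := by
        rw [hrk, hArank, hB]
        omega
      obtain ⟨x, hx0, hxAB⟩ := dim_inter A B (S τ) hAS inf_le_left hdim
      have hxS : x ∈ S τ := hAS hxAB.1
      have hlow : μw τ i * ‖x‖ ^ 2 ≤ ⟪x, T x⟫ := by
        refine quad_lower _ (fun j => μw τ (fl j))
          (hwo.comp fl (Fin.strictMono_castLE i.isLt).injective) T x hxAB.1 ?_ (μw τ i) ?_
        · intro j
          show ⟪x, T (w τ (fl j))⟫ = μw τ (fl j) * ⟪w τ (fl j), x⟫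
          rw [hprojinner τ x hxS (T (w τ (fl j))), hweig (fl j), real_inner_smul_right,
            real_inner_comm]
        · intro j
          exact hword (fl j) i (Fin.mk_le_mk.mpr (Nat.lt_succ_iff.mp j.isLt))
      have hup : ⟪x, T x⟫ ≤ lam i * ‖x‖ ^ 2 := by
        refine gap_bound T hsymm lam mu e horth heig hmono (fun p => (hsep p).le) hgap i x ?_
        intro j hj
        have hjW : e j ∈ W := by
          rw [hW]
          exact subset_span ⟨⟨↑j, hj⟩, congrArg e (Fin.ext rfl)⟩
        exact (Submodule.mem_orthogonal W x).mp hxAB.2.2 (e j) hjW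
      have hxpos : 0 < ‖x‖ ^ 2 := pow_pos (norm_pos_iff.mpr hx0) 2
      nlinarith [hlow, hup, hxpos]
    -- eventual lower bound
    have hlb : ∀ ε : ℝ, 0 < ε → ∀ᶠ τ in atTop, lam i - ε < μw τ i := by
      intro ε hε
      set ε' : ℝ := ε / 2 with hε'
      have hε'pos : 0 < ε' := by positivity
      set c : ℝ := min 1 (ε' / (3 * (lam i + C) + 1)) with hc
      have hcpos : 0 < c := by
        refine lt_min one_pos ?_
        have : 0 < 3 * (lam i + C) + 1 := by nlinarith [hlam0 i]
        positivity
      filter_upwards [hsmall c hcpos, hw] with τ hτc hτw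
      obtain ⟨hwo, hwS, hweig, hword⟩ := hτw
      have hτ1 : η τ < 1 := lt_of_lt_of_le hτc (min_le_left _ _)
      have hrk : finrank ℝ (S τ) = k := hSrank τ hτ1
      have hinj := Lmap_inj e (v τ) horth hτ1
      have hηε : 3 * η τ * (lam i + C) ≤ ε' := by
        have h1 : η τ < ε' / (3 * (lam i + C) + 1) := lt_of_lt_of_le hτc (min_le_right _ _)
        have h2 : 0 < 3 * (lam i + C) + 1 := by nlinarith [hlam0 i]
        have h3 : 0 ≤ lam i + C := by nlinarith [hlam0 i]
        rw [lt_div_iff₀ h2] at h1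
        nlinarith [hη0 τ]
      set fl : Fin (↑i + 1) → Fin k := fun j => Fin.castLE i.isLt j with hfl
      set fh : Fin (k - ↑i) → Fin k := fun j => ⟨↑i + ↑j, by omega⟩ with hfh
      set A : Submodule ℝ (EuclideanSpace ℝ (Fin d)) :=
        Submodule.map (Lmap e (v τ)) (span ℝ (range (e ∘ fl)))
        with hA
      set B : Submodule ℝ (EuclideanSpace ℝ (Fin d)) :=
        span ℝ (range (w τ ∘ fh)) with hB
      have hAS : A ≤ S τ := by
        rw [hA, ← hmapfull τ]
        exact Submodule.map_mono (span_mono (by rintro - ⟨j, rfl⟩; exact ⟨fl j, rfl⟩))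
      have hBS : B ≤ S τ := by
        rw [hB, span_le]
        rintro - ⟨j, rfl⟩
        exact hwS _
      have hArank : finrank ℝ A = ↑i + 1 := by
        rw [hA, ← (Submodule.equivMapOfInjective _ hinj _).finrank_eq,
          finrank_span_eq_card
            ((horth.comp fl (Fin.strictMono_castLE i.isLt).injective).linearIndependent),
          Fintype.card_fin]
      have hfhinj : Function.Injective fh := by
        intro a b hab
        have h := congrArg Fin.val hab
        simp only [hfh] at h
        exact Fin.ext (by omega)
      have hBrank : finrank ℝ B = k - ↑i := by
        rw [hB, finrank_span_eq_card ((hwo.comp fh hfhinj).linearIndependent),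
          Fintype.card_fin]
      have hik : (↑i : ℕ) < k := i.isLt
      have hdim : finrank ℝ (S τ) < finrank ℝ A + finrank ℝ B := by
        rw [hrk, hArank, hBrank]
        omega
      obtain ⟨x, hx0, hxAB⟩ := dim_inter A B (S τ) hAS hBS hdim
      have hxS : x ∈ S τ := hAS hxAB.1
      have hlow : (lam i - ε') * ‖x‖ ^ 2 ≤ ⟪x, T x⟫ :=
        mapped_lower T hpsd C hC0 hCb lam e horth heig hmono i (v τ) ε' hε'pos
          (le_of_lt hτ1) hηε x hxAB.1
      have hup : ⟪x, T x⟫ ≤ μw τ i * ‖x‖ ^ 2 := by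
        refine quad_upper _ (fun j => μw τ (fh j)) (hwo.comp fh hfhinj) T x hxAB.2 ?_
          (μw τ i) ?_
        · intro j
          show ⟪x, T (w τ (fh j))⟫ = μw τ (fh j) * ⟪w τ (fh j), x⟫
          rw [hprojinner τ x hxS (T (w τ (fh j))), hweig (fh j), real_inner_smul_right,
            real_inner_comm]
        · intro j
          exact hword i (fh j) (by rw [hfh]; exact Fin.mk_le_mk.mpr (Nat.le_add_right _ _))
      have hxpos : 0 < ‖x‖ ^ 2 := pow_pos (norm_pos_iff.mpr hx0) 2
      have hfin : lam i - ε' ≤ μw τ i := by nlinarith [hlow, hup, hxpos]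
      have : lam i - ε < lam i - ε' := by
        rw [hε']
        linarith
      linarith
    rw [tendsto_order]
    constructor
    · intro a ha
      have h := hlb (lam i - a) (by linarith)
      filter_upwards [h] with τ hτ
      linarith
    · intro b hb
      filter_upwards [hub] with τ hτ
      linarith
end

section
/- (Counterexample: the full-PCA step can decrease accuracy.) Let C = (1/3)·diag(9, 4, 1) ∈ ℝ^{3×3}, whose first principal direction is e₁ = (1,0,0). Let 0 < ε with ε² < 3/8, and set a = (ε, 0, √(1−ε²)), b = (0, 1, 0), and S = span(a, b). Then: (i) {a, b} is an orthonormal basis of S; (ii) aᵀCb = 0, aᵀCa = (8ε² + 1)/3 and bᵀCb = 4/3, so aᵀCa < bᵀCb and b is, up to sign, the unique maximizer of v ↦ vᵀCv over unit vectors v ∈ S (hence the full-PCA step on S returns b as the first principal component); yet (iii) ⟨b, e₁⟩² = 0 < ε² = ⟨a, e₁⟩². Thus the full-PCA step on S strictly decreases the accuracy of the predicted first principal component relative to the priming estimate a. -/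
open Matrix

set_option maxHeartbeats 1000000

/-- **Counterexample: the full-PCA step can decrease accuracy.** Let
`C = (1/3)·diag(9,4,1)`, whose first principal direction is `e₁ = (1,0,0)` (a unit
eigenvector for the largest eigenvalue `3`). Let `0 < ε` with `ε² < 3/8`, and set
`a = (ε, 0, √(1-ε²))`, `b = (0,1,0)`, `S = span(a, b)`. Then `{a, b}` is an orthonormal
basis of `S`; `aᵀCb = 0`, `aᵀCa = (8ε²+1)/3 < 4/3 = bᵀCb`, and `b` is, up to sign, the
unique maximizer of `v ↦ vᵀCv` over the unit vectors of `S` (so the full-PCA step on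
`S` returns `b` as first principal component); yet `⟨b, e₁⟩² = 0 < ε² = ⟨a, e₁⟩²`, so
the full-PCA step strictly decreases the accuracy of the predicted first principal
component relative to the priming estimate `a`. -/
theorem fullPCA_counterexample (ε : ℝ) (hε : 0 < ε) (hε2 : ε ^ 2 < 3 / 8)
    (C : Matrix (Fin 3) (Fin 3) ℝ)
    (hC : C = !![3, 0, 0; 0, 4/3, 0; 0, 0, 1/3])
    (e1 a b : Fin 3 → ℝ)
    (he1 : e1 = ![1, 0, 0])
    (ha : a = ![ε, 0, Real.sqrt (1 - ε ^ 2)])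
    (hb : b = ![0, 1, 0])
    (S : Submodule ℝ (Fin 3 → ℝ))
    (hS : S = Submodule.span ℝ {a, b}) :
    -- e₁ is the first principal direction of C
    (e1 ⬝ᵥ e1 = 1 ∧ C *ᵥ e1 = (3 : ℝ) • e1 ∧
      ∀ v : Fin 3 → ℝ, v ⬝ᵥ (C *ᵥ v) ≤ 3 * (v ⬝ᵥ v)) ∧
    -- (i) {a, b} is an orthonormal basis of S
    (a ⬝ᵥ a = 1 ∧ b ⬝ᵥ b = 1 ∧ a ⬝ᵥ b = 0) ∧
    -- (ii) the quadratic form on S, and b as the unique maximizer up to sign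
    (a ⬝ᵥ (C *ᵥ b) = 0 ∧ a ⬝ᵥ (C *ᵥ a) = (8 * ε ^ 2 + 1) / 3 ∧
      b ⬝ᵥ (C *ᵥ b) = 4 / 3 ∧ a ⬝ᵥ (C *ᵥ a) < b ⬝ᵥ (C *ᵥ b) ∧
      ∀ v ∈ S, v ⬝ᵥ v = 1 →
        v ⬝ᵥ (C *ᵥ v) ≤ b ⬝ᵥ (C *ᵥ b) ∧
        (v ⬝ᵥ (C *ᵥ v) = b ⬝ᵥ (C *ᵥ b) → v = b ∨ v = -b)) ∧
    -- (iii) the accuracy strictly decreases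
    ((b ⬝ᵥ e1) ^ 2 = 0 ∧ (a ⬝ᵥ e1) ^ 2 = ε ^ 2 ∧
      (b ⬝ᵥ e1) ^ 2 < (a ⬝ᵥ e1) ^ 2) := by
  set s := Real.sqrt (1 - ε ^ 2) with hsdef
  have hε2' : (0:ℝ) ≤ 1 - ε ^ 2 := by nlinarith
  have hs2 : s ^ 2 = 1 - ε ^ 2 := Real.sq_sqrt hε2'
  subst hC he1 ha hb hS
  have hd : ∀ u v : Fin 3 → ℝ, u ⬝ᵥ v = u 0 * v 0 + u 1 * v 1 + u 2 * v 2 := by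
    intro u v; simp [dotProduct, Fin.sum_univ_three]
  have hq : ∀ u v : Fin 3 → ℝ,
      u ⬝ᵥ ((!![(3:ℝ), 0, 0; 0, 4/3, 0; 0, 0, 1/3]) *ᵥ v)
        = 3 * (u 0 * v 0) + 4/3 * (u 1 * v 1) + 1/3 * (u 2 * v 2) := by
    intro u v
    simp [mulVec, dotProduct, Fin.sum_univ_three, Matrix.vecHead, Matrix.vecTail]
    ring
  have ha0 : (![ε, 0, s] : Fin 3 → ℝ) 0 = ε := rfl
  have ha1 : (![ε, 0, s] : Fin 3 → ℝ) 1 = 0 := rfl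
  have ha2 : (![ε, 0, s] : Fin 3 → ℝ) 2 = s := rfl
  have hb0 : (![(0:ℝ), 1, 0] : Fin 3 → ℝ) 0 = 0 := rfl
  have hb1 : (![(0:ℝ), 1, 0] : Fin 3 → ℝ) 1 = 1 := rfl
  have hb2 : (![(0:ℝ), 1, 0] : Fin 3 → ℝ) 2 = 0 := rfl
  have he0 : (![(1:ℝ), 0, 0] : Fin 3 → ℝ) 0 = 1 := rfl
  have he1' : (![(1:ℝ), 0, 0] : Fin 3 → ℝ) 1 = 0 := rfl
  have he2 : (![(1:ℝ), 0, 0] : Fin 3 → ℝ) 2 = 0 := rfl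
  refine ⟨⟨?_, ?_, ?_⟩, ⟨?_, ?_, ?_⟩, ⟨?_, ?_, ?_, ?_, ?_⟩, ?_, ?_, ?_⟩
  · rw [hd, he0, he1', he2]; ring
  · funext i
    fin_cases i <;> simp [mulVec, dotProduct, Fin.sum_univ_three]
  · intro v
    rw [hq, hd]
    nlinarith [sq_nonneg (v 0), sq_nonneg (v 1), sq_nonneg (v 2)]
  · rw [hd, ha0, ha1, ha2]; nlinarith
  · rw [hd, hb0, hb1, hb2]; ring
  · rw [hd, ha0, ha1, ha2, hb0, hb1, hb2]; ring
  · rw [hq, ha0, ha1, ha2, hb0, hb1, hb2]; ring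
  · rw [hq, ha0, ha1, ha2]; nlinarith
  · rw [hq, hb0, hb1, hb2]; ring
  · rw [hq, hq, ha0, ha1, ha2, hb0, hb1, hb2]; nlinarith
  · intro v hv hv1
    rw [Submodule.mem_span_pair] at hv
    obtain ⟨x, y, rfl⟩ := hv
    have h0 : (x • ![ε, 0, s] + y • ![(0:ℝ), 1, 0]) 0 = x * ε := by
      simp
    have h1 : (x • ![ε, 0, s] + y • ![(0:ℝ), 1, 0]) 1 = y := by
      simp
    have h2 : (x • ![ε, 0, s] + y • ![(0:ℝ), 1, 0]) 2 = x * s := by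
      simp
    rw [hd, h0, h1, h2] at hv1
    rw [hq, hq, h0, h1, h2, hb0, hb1, hb2]
    have hss : x * s * (x * s) = x * x * (1 - ε ^ 2) := by
      have : s * s = 1 - ε ^ 2 := by rw [← hs2]; ring
      calc x * s * (x * s) = x * x * (s * s) := by ring
        _ = x * x * (1 - ε ^ 2) := by rw [this]
    rw [hss] at hv1
    rw [show 3 * (x * ε * (x * ε)) + 4 / 3 * (y * y) + 1 / 3 * (x * s * (x * s))
        = 3 * (x * ε * (x * ε)) + 4 / 3 * (y * y) + 1 / 3 * (x * x * (1 - ε ^ 2)) by rw [hss]]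
    have hnorm : x ^ 2 + y ^ 2 = 1 := by nlinarith
    constructor
    · nlinarith [sq_nonneg x, sq_nonneg y]
    · intro heq
      have hx2 : x * x = 0 := by nlinarith [mul_self_nonneg x]
      have hx : x = 0 := mul_self_eq_zero.mp hx2
      have hy2 : y * y = 1 := by nlinarith
      rcases mul_self_eq_one_iff.mp hy2 with rfl | rfl
      · left; funext i; fin_cases i <;> simp [hx]
      · right; funext i; fin_cases i <;> simp [hx]
  · rw [hd, hb0, hb1, hb2, he0, he1', he2]; ring
  · rw [hd, ha0, ha1, ha2, he0, he1', he2]; ring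
  · rw [hd, hd, ha0, ha1, ha2, hb0, hb1, hb2, he0, he1', he2]
    nlinarith
end
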